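/- arXiv:2009.03672 — 3 statements merged into one kernel-verified Lean document; each statement's English description precedes it below -/
import Mathlib

section
/- Define h_n(s) := (1 - F_{0,n}(s)) · Π_{k=1}^{n-1} F_{k,n}(s), where F_{i,n} are compositions of geometric generating functions F_i(s) = 1/(1+e^{X_i}(1-s)). Then h_n(s) = [1/(a_n(1-s)^{-1} + b_n)] · [a_n(1-s)^{-1} / (a_n(1-s)^{-1} + b_n - b_1)], where a_n = e^{-S_n}, b_j = Σ_{k=0}^{j-1} e^{-S_k}, S_k = X_1 + ⋯ + X_k, S_0 = 0. -/
/-- The geometric offspring generating function with mean `e^x`. -/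
noncomputable def geomF (x s : ℝ) : ℝ := 1 / (1 + Real.exp x * (1 - s))

/-- `compF X n i s = F_{i+1}(F_{i+2}(⋯ F_n(s) ⋯))`. -/
noncomputable def compF (X : ℕ → ℝ) (n : ℕ) : ℕ → ℝ → ℝ := fun i s =>
  if _h : i < n then geomF (X (i + 1)) (compF X n (i + 1) s) else s
termination_by i => n - i
decreasing_by omega

/-- The associated random walk `S_k = X_1 + ⋯ + X_k`, `S_0 = 0`. -/
noncomputable def walkS (X : ℕ → ℝ) (k : ℕ) : ℝ := ∑ j ∈ Finset.range k, X (j + 1)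

/-- `b_j = ∑_{k=0}^{j-1} e^{-S_k}`. -/
noncomputable def coefb (X : ℕ → ℝ) (j : ℕ) : ℝ :=
  ∑ k ∈ Finset.range j, Real.exp (-(walkS X k))

/-!
Writing `a = e^{-S_n}/(1-s)` and `D_k = a + b_n - b_k` (`compDenom`), one checks by downward
induction on `i` that `F_{i,n}(s) = D_{i+1}/D_i`: the base case is `D_{n+1}/D_n = 1 - (1-s) = s`,
and each step is the identity `F_{i+1}(D_{i+2}/D_{i+1}) = D_{i+1}/D_i`, which rests on
`D_{i+1} - D_{i+2} = e^{-S_{i+1}}` and `e^{X_{i+1}} e^{-S_{i+1}} = e^{-S_i} = D_i - D_{i+1}`.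
The product then telescopes to `D_n/D_1 = a/D_1`, while `1 - F_{0,n}(s) = (D_0 - D_1)/D_0 = 1/D_0`.
-/

open Finset

namespace Finset

theorem prod_Ico_div₀ {G₀ : Type*} [CommGroupWithZero G₀] (f : ℕ → G₀) {m n : ℕ} (hmn : m ≤ n)
    (hf : ∀ k ∈ Icc m n, f k ≠ 0) : ∏ i ∈ Ico m n, f (i + 1) / f i = f n / f m := by
  induction n, hmn using Nat.le_induction with
  | base => simp [div_self (hf m (by simp))]
  | succ n hmn ih =>
    have hfn : f n ≠ 0 := hf n (mem_Icc.2 ⟨hmn, n.le_succ⟩)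
    rw [prod_Ico_succ_top hmn,
      ih fun k hk => hf k (mem_Icc.2 ⟨(mem_Icc.1 hk).1, (mem_Icc.1 hk).2.trans n.le_succ⟩),
      mul_comm, div_mul_div_cancel₀ hfn]

end Finset

theorem geomF_div (x u v : ℝ) (hv : v ≠ 0) :
    geomF x (u / v) = v / (v + Real.exp x * (v - u)) := by
  rw [geomF, one_sub_div hv, mul_div_assoc', one_add_div hv, one_div_div]

theorem compF_self (X : ℕ → ℝ) (n : ℕ) (s : ℝ) : compF X n n s = s := by
  rw [compF, dif_neg (lt_irrefl n)]

theorem compF_of_lt (X : ℕ → ℝ) {n i : ℕ} (hi : i < n) (s : ℝ) :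
    compF X n i s = geomF (X (i + 1)) (compF X n (i + 1) s) := by
  rw [compF, dif_pos hi]

theorem walkS_succ (X : ℕ → ℝ) (k : ℕ) : walkS X (k + 1) = walkS X k + X (k + 1) :=
  sum_range_succ _ _

theorem coefb_succ (X : ℕ → ℝ) (k : ℕ) :
    coefb X (k + 1) = coefb X k + Real.exp (-walkS X k) :=
  sum_range_succ _ _

theorem coefb_zero (X : ℕ → ℝ) : coefb X 0 = 0 := sum_range_zero _

theorem coefb_mono (X : ℕ → ℝ) : Monotone (coefb X) := fun _ _ h =>
  sum_le_sum_of_subset_of_nonneg (range_mono h) fun _ _ _ => (Real.exp_pos _).le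

noncomputable def compDenom (X : ℕ → ℝ) (n : ℕ) (s : ℝ) (k : ℕ) : ℝ :=
  Real.exp (-walkS X n) * (1 - s)⁻¹ + coefb X n - coefb X k

section compDenom

variable (X : ℕ → ℝ) (n : ℕ) (s : ℝ)

theorem compDenom_self : compDenom X n s n = Real.exp (-walkS X n) * (1 - s)⁻¹ := by
  rw [compDenom, add_sub_cancel_right]

theorem compDenom_sub_succ (k : ℕ) :
    compDenom X n s k - compDenom X n s (k + 1) = Real.exp (-walkS X k) := by
  rw [compDenom, compDenom, coefb_succ]
  ring

theorem compDenom_succ_self (hs : s ≠ 1) : compDenom X n s (n + 1) = s * compDenom X n s n := by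
  have : 1 - s ≠ 0 := sub_ne_zero.2 hs.symm
  rw [compDenom, compDenom, coefb_succ]
  field_simp
  ring

theorem compDenom_pos (hs : s < 1) {k : ℕ} (hk : k ≤ n) : 0 < compDenom X n s k := by
  have ha : 0 < Real.exp (-walkS X n) * (1 - s)⁻¹ :=
    mul_pos (Real.exp_pos _) (inv_pos.2 (sub_pos.2 hs))
  have := coefb_mono X hk
  rw [compDenom]
  linarith

theorem compF_eq_compDenom_div (hs : s < 1) {i : ℕ} (hi : i ≤ n) :
    compF X n i s = compDenom X n s (i + 1) / compDenom X n s i := by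
  induction hi using Nat.decreasingInduction with
  | self =>
    rw [compF_self, compDenom_succ_self X n s hs.ne,
      mul_div_cancel_right₀ _ (compDenom_pos X n s hs le_rfl).ne']
  | of_succ i hi ih =>
    have hstep : Real.exp (X (i + 1)) * Real.exp (-walkS X (i + 1)) = Real.exp (-walkS X i) := by
      rw [← Real.exp_add, walkS_succ]
      ring_nf
    rw [compF_of_lt X hi, ih, geomF_div _ _ _ (compDenom_pos X n s hs hi).ne',
      compDenom_sub_succ, hstep, ← compDenom_sub_succ, add_sub_cancel]

end compDenom

/-- `h_n(s) = (1 - F_{0,n}(s)) ∏_{k=1}^{n-1} F_{k,n}(s)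
  = [a_n(1-s)^{-1} + b_n]⁻¹ · a_n(1-s)^{-1} / (a_n(1-s)^{-1} + b_n - b_1)`. -/
theorem h_n_formula (X : ℕ → ℝ) (n : ℕ) (hn : 1 ≤ n) (s : ℝ)
    (hs : s ∈ Set.Ico (0 : ℝ) 1) :
    (1 - compF X n 0 s) * ∏ k ∈ Finset.Ico 1 n, compF X n k s =
      (1 / (Real.exp (-(walkS X n)) * (1 - s)⁻¹ + coefb X n)) *
      (Real.exp (-(walkS X n)) * (1 - s)⁻¹ /
        (Real.exp (-(walkS X n)) * (1 - s)⁻¹ + coefb X n - coefb X 1)) := by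
  have hD : ∀ k ≤ n, 0 < compDenom X n s k := fun k => compDenom_pos X n s hs.2
  have hprod : ∏ k ∈ Ico 1 n, compF X n k s = compDenom X n s n / compDenom X n s 1 := by
    rw [← prod_Ico_div₀ _ hn fun k hk => (hD k (mem_Icc.1 hk).2).ne']
    exact prod_congr rfl fun k hk => compF_eq_compDenom_div X n s hs.2 (mem_Ico.1 hk).2.le
  have hfirst : 1 - compF X n 0 s = 1 / compDenom X n s 0 := by
    rw [compF_eq_compDenom_div X n s hs.2 (Nat.zero_le n), one_sub_div (hD 0 (Nat.zero_le n)).ne',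
      compDenom_sub_succ, walkS, sum_range_zero, neg_zero, Real.exp_zero]
  rw [hfirst, hprod, compDenom_self, compDenom, compDenom, coefb_zero, sub_zero]
end

section
/- Let (X_k) be i.i.d. real random variables and S_n = X_1 + ⋯ + X_n. For the time of first minimum τ(n) := min{0 ≤ k ≤ n : S_k = min(S_0,...,S_n)}, any 0 ≤ j ≤ n and λ, μ > 0, one has E[e^{λ S_j + μ(S_j − S_n)}; τ(n) = j] = E[e^{λ S_j}; τ(j) = j] · E[e^{−μ S_{n−j}}; L_{n−j} ≥ 0], where L_m := min(S_0, S_1, ..., S_m); here the event {τ(n) = j} = {τ(j) = j} ∩ {min_{j ≤ k ≤ n}(S_k − S_j) ≥ 0} and the two factors are independent. -/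
open MeasureTheory ProbabilityTheory

/-- `firstMin S n ω` is the first time `k ≤ n` at which the walk attains its minimum
on `[0,n]`: `τ(n) = min{0 ≤ k ≤ n : S_k = min(S_0,…,S_n)}`. -/
noncomputable def firstMin {Ω : Type*} (S : ℕ → Ω → ℝ) (n : ℕ) (ω : Ω) : ℕ :=
  sInf {k | k ≤ n ∧ ∀ m ≤ n, S k ω ≤ S m ω}

lemma firstMin_eq_iff {Ω : Type*} (S : ℕ → Ω → ℝ) (n j : ℕ) (hj : j ≤ n) (ω : Ω) :
    firstMin S n ω = j ↔
      (∀ k < j, S j ω < S k ω) ∧ (∀ k, j ≤ k → k ≤ n → S j ω ≤ S k ω) := by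
  unfold firstMin
  set T := {k | k ≤ n ∧ ∀ m ≤ n, S k ω ≤ S m ω} with hT
  have hne : T.Nonempty := by
    obtain ⟨k₀, hk₀, hmin⟩ := Finset.exists_min_image (Finset.range (n+1)) (fun k => S k ω)
      ⟨0, by simp⟩
    exact ⟨k₀, by simpa [Nat.lt_succ_iff] using hk₀,
      fun m hm => hmin m (by simp [Nat.lt_succ_iff, hm])⟩
  constructor
  · intro h
    have hmem : j ∈ T := h ▸ Nat.sInf_mem hne
    refine ⟨fun k hk => ?_, fun k hk1 hk2 => hmem.2 k hk2⟩
    have hknot : k ∉ T := fun hkT => absurd (h ▸ Nat.sInf_le hkT) (by omega)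
    simp only [hT, Set.mem_setOf_eq, not_and, not_forall] at hknot
    obtain ⟨m, hm, hlt⟩ := hknot (by omega)
    exact lt_of_le_of_lt (hmem.2 m hm) (not_le.mp hlt)
  · rintro ⟨h1, h2⟩
    have hjT : j ∈ T := ⟨hj, fun m hm => by
      rcases lt_or_ge m j with hmj | hmj
      · exact (h1 m hmj).le
      · exact h2 m hmj hm⟩
    have hle : ∀ k ∈ T, j ≤ k := by
      intro k hk
      by_contra hlt
      exact absurd (hk.2 j hj) (not_le.mpr (h1 k (by omega)))
    exact le_antisymm (Nat.sInf_le hjT) (hle _ (Nat.sInf_mem hne))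

/-- The joint law of any injectively-reindexed finite block of an i.i.d. family is the
product of copies of the common marginal law. -/
lemma aux_map_pi {Ω : Type*} [MeasurableSpace Ω] {μ : Measure Ω} [IsProbabilityMeasure μ]
    (X : ℕ → Ω → ℝ) (hmeas : ∀ i, Measurable (X i))
    (hindep : iIndepFun X μ)
    (hident : ∀ i, IdentDistrib (X i) (X 0) μ μ)
    (m : ℕ) (σ : Fin m → ℕ) (hσ : Function.Injective σ) :
    Measure.map (fun ω i => X (σ i) ω) μ
      = Measure.pi (fun _ => Measure.map (X 0) μ) := by
  classical
  haveI hprob : IsProbabilityMeasure (Measure.map (X 0) μ) :=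
    Measure.isProbabilityMeasure_map (hmeas 0).aemeasurable
  refine (Measure.pi_eq (μ := fun _ : Fin m => Measure.map (X 0) μ) fun s hs => ?_).symm
  have hmV : Measurable (fun ω (i : Fin m) => X (σ i) ω) :=
    measurable_pi_lambda _ fun i => hmeas (σ i)
  rw [Measure.map_apply hmV (MeasurableSet.univ_pi hs)]
  have hpre : (fun ω (i : Fin m) => X (σ i) ω) ⁻¹' Set.pi Set.univ s
      = ⋂ i : Fin m, X (σ i) ⁻¹' s i := by
    ext ω; simp [Set.mem_pi]
  rw [hpre]
  set sets : ℕ → Set ℝ := fun k => if h : ∃ i, σ i = k then s h.choose else Set.univ with hsets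
  have hsets_meas : ∀ k, k ∈ Finset.image σ Finset.univ → MeasurableSet (sets k) := by
    intro k _
    by_cases h : ∃ i, σ i = k
    · simp only [hsets, dif_pos h]; exact hs _
    · simp only [hsets, dif_neg h]; exact MeasurableSet.univ
  have hsets_eq : ∀ i : Fin m, sets (σ i) = s i := by
    intro i
    have h : ∃ i', σ i' = σ i := ⟨i, rfl⟩
    have := h.choose_spec
    simp only [hsets, dif_pos h]
    rw [hσ this]
  have hiInter : (⋂ i : Fin m, X (σ i) ⁻¹' s i)
      = ⋂ k ∈ Finset.image σ Finset.univ, X k ⁻¹' sets k := by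
    ext ω
    simp only [Set.mem_iInter, Finset.mem_image, Finset.mem_univ, true_and]
    constructor
    · rintro h k ⟨i, rfl⟩; rw [hsets_eq i]; exact h i
    · intro h i; rw [← hsets_eq i]; exact h _ ⟨i, rfl⟩
  rw [hiInter, hindep.measure_inter_preimage_eq_mul _ hsets_meas,
    Finset.prod_image (fun a _ b _ h => hσ h)]
  refine Finset.prod_congr rfl fun i _ => ?_
  rw [hsets_eq i]
  show μ (X (σ i) ⁻¹' s i) = Measure.map (X 0) μ (s i)
  rw [← (hident (σ i)).map_eq, Measure.map_apply (hmeas (σ i)) (hs i)]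

/-- Partial sum of the first `k` coordinates of a vector in `ℝ^p` (coordinates beyond `p`
count as `0`). -/
noncomputable def psum (p k : ℕ) (x : Fin p → ℝ) : ℝ :=
  ∑ i ∈ Finset.range k, if h : i < p then x ⟨i, h⟩ else 0

lemma measurable_psum (p k : ℕ) : Measurable (psum p k) := by
  unfold psum
  apply Finset.measurable_sum
  intro i _
  by_cases h : i < p
  · simp only [dif_pos h]; exact measurable_pi_apply _
  · simp only [dif_neg h]; exact measurable_const

/-- Splitting at the first minimum: for an i.i.d. walk, `0 ≤ j ≤ n` and `λ, μ > 0`,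
`E[e^{λS_j + μ(S_j − S_n)}; τ(n) = j]
  = E[e^{λS_j}; τ(j) = j] · E[e^{−μ S_{n−j}}; L_{n−j} ≥ 0]`. -/
theorem split_at_first_min
    {Ω : Type*} [MeasurableSpace Ω] {μ : Measure Ω} [IsProbabilityMeasure μ]
    (X : ℕ → Ω → ℝ) (hmeas : ∀ i, Measurable (X i))
    (hindep : iIndepFun X μ)
    (hident : ∀ i, IdentDistrib (X i) (X 0) μ μ)
    (S : ℕ → Ω → ℝ) (hS : ∀ k ω, S k ω = ∑ j ∈ Finset.range k, X j ω)
    (lam mub : ℝ) (hlam : 0 < lam) (hmub : 0 < mub)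
    (n j : ℕ) (hj : j ≤ n) :
    ∫ ω in {ω | firstMin S n ω = j},
        Real.exp (lam * S j ω + mub * (S j ω - S n ω)) ∂μ =
      (∫ ω in {ω | firstMin S j ω = j}, Real.exp (lam * S j ω) ∂μ) *
      (∫ ω in {ω | ∀ k ≤ n - j, 0 ≤ S k ω}, Real.exp (-mub * S (n - j) ω) ∂μ) := by
  classical
  set m := n - j with hm
  have hjm : j + m = n := by omega
  -- measurability of the walk
  have hSfun : ∀ k, S k = fun ω => ∑ i ∈ Finset.range k, X i ω :=
    fun k => funext fun ω => hS k ω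
  have hSmeas : ∀ k, Measurable (S k) := by
    intro k
    rw [hSfun k]
    exact Finset.measurable_sum _ fun i _ => hmeas i
  -- partial sum identities
  have hUps : ∀ (ω : Ω) (k : ℕ), k ≤ j →
      psum j k (fun i : Fin j => X i ω) = S k ω := by
    intro ω k hk
    rw [hS]
    unfold psum
    refine Finset.sum_congr rfl fun i hi => ?_
    exact dif_pos (lt_of_lt_of_le (Finset.mem_range.mp hi) hk)
  have hVps : ∀ (ω : Ω) (k : ℕ), k ≤ m →
      psum m k (fun t : Fin m => X (j + t) ω) = S (j + k) ω - S j ω := by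
    intro ω k hk
    rw [hS, hS, Finset.sum_range_add, add_sub_cancel_left]
    unfold psum
    refine Finset.sum_congr rfl fun i hi => ?_
    exact dif_pos (lt_of_lt_of_le (Finset.mem_range.mp hi) hk)
  have hU'ps : ∀ (ω : Ω) (k : ℕ), k ≤ m →
      psum m k (fun t : Fin m => X t ω) = S k ω := by
    intro ω k hk
    rw [hS]
    unfold psum
    refine Finset.sum_congr rfl fun i hi => ?_
    exact dif_pos (lt_of_lt_of_le (Finset.mem_range.mp hi) hk)
  -- the events
  set A : Set Ω := {ω | ∀ k < j, S j ω < S k ω} with hA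
  set B : Set Ω := {ω | ∀ k, j ≤ k → k ≤ n → S j ω ≤ S k ω} with hB
  set C : Set Ω := {ω | ∀ k ≤ m, 0 ≤ S k ω} with hC
  have hAmeas : MeasurableSet A := by
    have : A = ⋂ (k : ℕ), ⋂ (_ : k < j), {ω | S j ω < S k ω} := by
      ext ω; simp [hA]
    rw [this]
    exact MeasurableSet.iInter fun k => MeasurableSet.iInter fun _ =>
      measurableSet_lt (hSmeas j) (hSmeas k)
  have hBmeas : MeasurableSet B := by
    have : B = ⋂ (k : ℕ), ⋂ (_ : j ≤ k), ⋂ (_ : k ≤ n), {ω | S j ω ≤ S k ω} := by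
      ext ω; simp [hB]
    rw [this]
    exact MeasurableSet.iInter fun k => MeasurableSet.iInter fun _ =>
      MeasurableSet.iInter fun _ => measurableSet_le (hSmeas j) (hSmeas k)
  have hCmeas : MeasurableSet C := by
    have : C = ⋂ (k : ℕ), ⋂ (_ : k ≤ m), {ω | 0 ≤ S k ω} := by
      ext ω; simp [hC]
    rw [this]
    exact MeasurableSet.iInter fun k => MeasurableSet.iInter fun _ =>
      measurableSet_le measurable_const (hSmeas k)
  have hEn : {ω | firstMin S n ω = j} = A ∩ B := by
    ext ω
    simp only [Set.mem_setOf_eq, Set.mem_inter_iff, hA, hB]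
    exact firstMin_eq_iff S n j hj ω
  have hEj : {ω | firstMin S j ω = j} = A := by
    ext ω
    simp only [Set.mem_setOf_eq, hA]
    rw [firstMin_eq_iff S j j le_rfl ω]
    constructor
    · exact fun h => h.1
    · intro h
      refine ⟨h, fun k h1 h2 => ?_⟩
      have : k = j := le_antisymm h2 h1
      subst this; exact le_rfl
  -- the two coordinate maps and the two functionals
  set U : Ω → (Fin j → ℝ) := fun ω i => X i ω with hU
  set V : Ω → (Fin m → ℝ) := fun ω t => X (j + t) ω with hV
  set U' : Ω → (Fin m → ℝ) := fun ω t => X t ω with hU'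
  set φ : (Fin j → ℝ) → ℝ :=
    fun x => Set.indicator {x | ∀ k < j, psum j j x < psum j k x}
      (fun x => Real.exp (lam * psum j j x)) x with hφ
  set ψ : (Fin m → ℝ) → ℝ :=
    fun y => Set.indicator {y | ∀ t ≤ m, 0 ≤ psum m t y}
      (fun y => Real.exp (-mub * psum m m y)) y with hψ
  have hφmeas : Measurable φ := by
    apply Measurable.indicator
    · exact (Real.measurable_exp.comp ((measurable_psum j j).const_mul lam))
    · have : {x : Fin j → ℝ | ∀ k < j, psum j j x < psum j k x}
          = ⋂ (k : ℕ), ⋂ (_ : k < j), {x | psum j j x < psum j k x} := by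
        ext x; simp
      rw [this]
      exact MeasurableSet.iInter fun k => MeasurableSet.iInter fun _ =>
        measurableSet_lt (measurable_psum j j) (measurable_psum j k)
  have hψmeas : Measurable ψ := by
    apply Measurable.indicator
    · exact (Real.measurable_exp.comp ((measurable_psum m m).const_mul (-mub)))
    · have : {y : Fin m → ℝ | ∀ t ≤ m, 0 ≤ psum m t y}
          = ⋂ (t : ℕ), ⋂ (_ : t ≤ m), {y | 0 ≤ psum m t y} := by
        ext y; simp
      rw [this]
      exact MeasurableSet.iInter fun t => MeasurableSet.iInter fun _ =>
        measurableSet_le measurable_const (measurable_psum m t)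
  -- composition identities
  have hφU : ∀ ω, φ (U ω) = Set.indicator A (fun ω => Real.exp (lam * S j ω)) ω := by
    intro ω
    have hmem : (U ω) ∈ {x : Fin j → ℝ | ∀ k < j, psum j j x < psum j k x} ↔ ω ∈ A := by
      simp only [Set.mem_setOf_eq, hA, hU]
      constructor
      · intro h k hk
        have := h k hk
        rwa [hUps ω j le_rfl, hUps ω k hk.le] at this
      · intro h k hk
        rw [hUps ω j le_rfl, hUps ω k hk.le]
        exact h k hk
    by_cases hω : ω ∈ A
    · simp only [hφ]
      rw [Set.indicator_of_mem (hmem.mpr hω), Set.indicator_of_mem hω, hUps ω j le_rfl]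
    · simp only [hφ]
      rw [Set.indicator_of_notMem (fun h => hω (hmem.mp h)), Set.indicator_of_notMem hω]
  have hψV : ∀ ω, ψ (V ω)
      = Set.indicator B (fun ω => Real.exp (mub * (S j ω - S n ω))) ω := by
    intro ω
    have hmem : (V ω) ∈ {y : Fin m → ℝ | ∀ t ≤ m, 0 ≤ psum m t y} ↔ ω ∈ B := by
      simp only [Set.mem_setOf_eq, hB, hV]
      constructor
      · intro h k hk1 hk2
        have ht := h (k - j) (by omega)
        rw [hVps ω (k - j) (by omega)] at ht
        have hkj : j + (k - j) = k := by omega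
        rw [hkj] at ht
        linarith
      · intro h t ht
        rw [hVps ω t ht]
        have := h (j + t) (Nat.le_add_right _ _) (by omega)
        linarith
    have hval : Real.exp (-mub * psum m m (V ω)) = Real.exp (mub * (S j ω - S n ω)) := by
      rw [hVps ω m le_rfl, hjm]
      ring_nf
    by_cases hω : ω ∈ B
    · simp only [hψ]
      rw [Set.indicator_of_mem (hmem.mpr hω), Set.indicator_of_mem hω, hval]
    · simp only [hψ]
      rw [Set.indicator_of_notMem (fun h => hω (hmem.mp h)), Set.indicator_of_notMem hω]
  have hψU' : ∀ ω, ψ (U' ω)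
      = Set.indicator C (fun ω => Real.exp (-mub * S m ω)) ω := by
    intro ω
    have hmem : (U' ω) ∈ {y : Fin m → ℝ | ∀ t ≤ m, 0 ≤ psum m t y} ↔ ω ∈ C := by
      simp only [Set.mem_setOf_eq, hC, hU']
      constructor
      · intro h k hk
        have := h k hk
        rwa [hU'ps ω k hk] at this
      · intro h t ht
        rw [hU'ps ω t ht]
        exact h t ht
    by_cases hω : ω ∈ C
    · simp only [hψ]
      rw [Set.indicator_of_mem (hmem.mpr hω), Set.indicator_of_mem hω, hU'ps ω m le_rfl]
    · simp only [hψ]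
      rw [Set.indicator_of_notMem (fun h => hω (hmem.mp h)), Set.indicator_of_notMem hω]
  -- independence of the two blocks
  have hUV : IndepFun U V μ := by
    have h0 := hindep.indepFun_finset (Finset.range j) (Finset.Ico j n)
      (by
        simp only [Finset.disjoint_left, Finset.mem_range, Finset.mem_Ico]
        intro a ha
        omega) hmeas
    have h1 := h0.comp
      (φ := fun v (i : Fin j) => v ⟨i.1, Finset.mem_range.mpr i.2⟩)
      (ψ := fun v (t : Fin m) => v ⟨j + t.1, Finset.mem_Ico.mpr
        ⟨Nat.le_add_right _ _, by have := t.2; omega⟩⟩)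
      (measurable_pi_lambda _ fun i => measurable_pi_apply _)
      (measurable_pi_lambda _ fun t => measurable_pi_apply _)
    exact h1
  have hUVcomp : IndepFun (φ ∘ U) (ψ ∘ V) μ := hUV.comp hφmeas hψmeas
  -- put everything together
  have hLHS : ∫ ω in {ω | firstMin S n ω = j},
      Real.exp (lam * S j ω + mub * (S j ω - S n ω)) ∂μ
      = ∫ ω, (φ ∘ U) ω * (ψ ∘ V) ω ∂μ := by
    rw [hEn, ← integral_indicator (hAmeas.inter hBmeas)]
    refine integral_congr_ae (Filter.Eventually.of_forall fun ω => ?_)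
    simp only [Function.comp_apply]
    rw [hφU ω, hψV ω]
    by_cases hωA : ω ∈ A <;> by_cases hωB : ω ∈ B
    · rw [Set.indicator_of_mem (Set.mem_inter hωA hωB), Set.indicator_of_mem hωA,
        Set.indicator_of_mem hωB, ← Real.exp_add]
    · rw [Set.indicator_of_notMem (fun h => hωB h.2), Set.indicator_of_notMem hωB, mul_zero]
    · rw [Set.indicator_of_notMem (fun h => hωA h.1), Set.indicator_of_notMem hωA, zero_mul]
    · rw [Set.indicator_of_notMem (fun h => hωA h.1), Set.indicator_of_notMem hωA, zero_mul]
  have hmul : ∫ ω, (φ ∘ U) ω * (ψ ∘ V) ω ∂μ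
      = (∫ ω, (φ ∘ U) ω ∂μ) * ∫ ω, (ψ ∘ V) ω ∂μ := by
    have hUmeas : Measurable U := measurable_pi_lambda _ fun i => hmeas i
    have hVmeas : Measurable V := measurable_pi_lambda _ fun t => hmeas (j + t)
    have := hUVcomp.integral_mul_eq_mul_integral
      ((hφmeas.comp hUmeas).aestronglyMeasurable)
      ((hψmeas.comp hVmeas).aestronglyMeasurable)
    simpa [Pi.mul_apply] using this
  have hfirst : ∫ ω, (φ ∘ U) ω ∂μ
      = ∫ ω in {ω | firstMin S j ω = j}, Real.exp (lam * S j ω) ∂μ := by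
    rw [hEj, ← integral_indicator hAmeas]
    exact integral_congr_ae (Filter.Eventually.of_forall fun ω => hφU ω)
  have hsecond : ∫ ω, (ψ ∘ V) ω ∂μ
      = ∫ ω in {ω | ∀ k ≤ m, 0 ≤ S k ω}, Real.exp (-mub * S m ω) ∂μ := by
    have hVmeas : Measurable V := measurable_pi_lambda _ fun t => hmeas (j + t)
    have hU'meas : Measurable U' := measurable_pi_lambda _ fun t => hmeas t
    have hmapV : Measure.map V μ = Measure.pi (fun _ : Fin m => Measure.map (X 0) μ) :=
      aux_map_pi X hmeas hindep hident m (fun t => j + t.1)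
        (fun a b h => Fin.ext (by have h' : j + (a:ℕ) = j + (b:ℕ) := h; omega))
    have hmapU' : Measure.map U' μ = Measure.pi (fun _ : Fin m => Measure.map (X 0) μ) :=
      aux_map_pi X hmeas hindep hident m (fun t => t.1) Fin.val_injective
    calc ∫ ω, (ψ ∘ V) ω ∂μ
        = ∫ y, ψ y ∂(Measure.map V μ) := by
          rw [integral_map hVmeas.aemeasurable hψmeas.aestronglyMeasurable]
          rfl
      _ = ∫ y, ψ y ∂(Measure.map U' μ) := by rw [hmapV, hmapU']
      _ = ∫ ω, ψ (U' ω) ∂μ := integral_map hU'meas.aemeasurable hψmeas.aestronglyMeasurable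
      _ = ∫ ω, Set.indicator C (fun ω => Real.exp (-mub * S m ω)) ω ∂μ :=
          integral_congr_ae (Filter.Eventually.of_forall fun ω => hψU' ω)
      _ = ∫ ω in C, Real.exp (-mub * S m ω) ∂μ := integral_indicator hCmeas
      _ = ∫ ω in {ω | ∀ k ≤ m, 0 ≤ S k ω}, Real.exp (-mub * S m ω) ∂μ := by rw [hC]
  rw [hLHS, hmul, hfirst, hsecond]
end

section
/- Let Y be a branching process with one immigrant per generation in a geometric random environment: given the environment, offspring generating functions are F_k(s) = 1/(1+e^{X_k}(1-s)). Then the conditional probability, given the walk S, that all particles born at time n (excluding the new immigrant) are descendants of the immigrant who arrived at time i and that there is at least one such particle, equals E[(1 − F_{i,n}(0)) Π_{k=0, k≠i}^{n−1} F_{k,n}(0) | S] = (a_i/(a_n + b_n − b_{i+1})) · (a_n/(a_n + b_n)), where a_j = e^{−S_j}, b_j = Σ_{k=0}^{j−1} e^{−S_k}. -/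
open MeasureTheory ProbabilityTheory

noncomputable def Tfun (x : ℕ → ℝ) (n i : ℕ) : ℝ :=
  ∑ j ∈ Finset.range (n - i + 1), Real.exp (-(∑ k ∈ Finset.range j, x (i + 1 + k)))

lemma Tfun_pos (x : ℕ → ℝ) (n i : ℕ) : 0 < Tfun x n i := by
  apply Finset.sum_pos (fun j _ => Real.exp_pos _)
  simp

lemma Tfun_of_le (x : ℕ → ℝ) {n i : ℕ} (h : n ≤ i) : Tfun x n i = 1 := by
  have : n - i = 0 := by omega
  simp [Tfun, this]

lemma Tfun_rec (x : ℕ → ℝ) {n i : ℕ} (h : i < n) :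
    Tfun x n i = 1 + Real.exp (-(x (i + 1))) * Tfun x n (i + 1) := by
  have h1 : n - i + 1 = (n - (i + 1) + 1) + 1 := by omega
  rw [Tfun, h1, Finset.sum_range_succ']
  simp only [Finset.range_zero, Finset.sum_empty, neg_zero, Real.exp_zero]
  rw [add_comm, Tfun, Finset.mul_sum]
  congr 1
  apply Finset.sum_congr rfl
  intro j _
  rw [Finset.sum_range_succ',
    show ∑ k ∈ Finset.range j, x (i + 1 + (k + 1)) = ∑ k ∈ Finset.range j, x (i + 1 + 1 + k)
      from Finset.sum_congr rfl (fun k _ => by congr 1; omega),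
    ← Real.exp_add]
  congr 1
  ring

lemma compF_eq_aux (x : ℕ → ℝ) (n : ℕ) :
    ∀ d i, n - i ≤ d → compF x n i 0 = 1 - 1 / Tfun x n i := by
  intro d
  induction d with
  | zero =>
    intro i h
    rw [compF, dif_neg (by omega : ¬ i < n), Tfun_of_le x (by omega)]; norm_num
  | succ d ih =>
    intro i h
    by_cases hi : i < n
    · rw [compF, dif_pos hi, ih (i + 1) (by omega)]
      have hT := Tfun_pos x n (i + 1)
      have hE := Real.exp_pos (x (i + 1))
      rw [Tfun_rec x hi, geomF, Real.exp_neg]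
      have h1 : Tfun x n (i + 1) ≠ 0 := ne_of_gt hT
      have h2 : Real.exp (x (i + 1)) ≠ 0 := ne_of_gt hE
      have h3 : Tfun x n (i + 1) + Real.exp (x (i + 1)) ≠ 0 := by positivity
      field_simp
      rw [show Tfun x n (i + 1) - (Tfun x n (i + 1) - 1) = 1 by ring, mul_one, div_eq_iff h3]
      ring
    · rw [compF, dif_neg hi, Tfun_of_le x (by omega)]; norm_num

lemma compF_eq (x : ℕ → ℝ) (n i : ℕ) : compF x n i 0 = 1 - 1 / Tfun x n i :=
  compF_eq_aux x n (n - i) i le_rfl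

lemma prod_compF (x : ℕ → ℝ) (n : ℕ) :
    ∀ m, m ≤ n → ∏ k ∈ Finset.range m, compF x n k 0
      = Real.exp (-(∑ j ∈ Finset.range m, x (j + 1))) * Tfun x n m / Tfun x n 0 := by
  intro m
  induction m with
  | zero => simp [(Tfun_pos x n 0).ne', div_self]
  | succ m ih =>
    intro h
    have hm : m < n := by omega
    rw [Finset.prod_range_succ, ih (by omega), compF_eq,
      Finset.sum_range_succ, neg_add, Real.exp_add, Tfun_rec x hm]
    have hTm1 := Tfun_pos x n (m + 1)
    have h0 := Tfun_pos x n 0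
    have hne : (1 : ℝ) + Real.exp (-(x (m + 1))) * Tfun x n (m + 1) ≠ 0 := by positivity
    field_simp
    ring

lemma exp_mul_Tfun (x : ℕ → ℝ) (n j : ℕ) (h : j ≤ n) :
    Real.exp (-(∑ k ∈ Finset.range j, x (k + 1))) * Tfun x n j
      = ∑ m ∈ Finset.Ico j (n + 1), Real.exp (-(∑ k ∈ Finset.range m, x (k + 1))) := by
  rw [Finset.sum_Ico_eq_sum_range, show n + 1 - j = n - j + 1 from by omega,
    Tfun, Finset.mul_sum]
  apply Finset.sum_congr rfl
  intro l _
  rw [← Real.exp_add]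
  congr 1
  rw [Finset.sum_range_add,
    show ∑ k ∈ Finset.range l, x (j + k + 1) = ∑ k ∈ Finset.range l, x (j + 1 + k)
      from Finset.sum_congr rfl (fun k _ => by congr 1; omega)]
  ring

lemma key_identity (x : ℕ → ℝ) (n i : ℕ) (hi : i < n) :
    (1 - compF x n i 0) * ∏ j ∈ (Finset.range n).erase i, compF x n j 0
    = (Real.exp (-(∑ k ∈ Finset.range i, x (k + 1))) /
        (Real.exp (-(∑ k ∈ Finset.range n, x (k + 1)))
          + (∑ k ∈ Finset.range n, Real.exp (-(∑ l ∈ Finset.range k, x (l + 1))))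
          - ∑ k ∈ Finset.range (i + 1), Real.exp (-(∑ l ∈ Finset.range k, x (l + 1))))) *
      (Real.exp (-(∑ k ∈ Finset.range n, x (k + 1))) /
        (Real.exp (-(∑ k ∈ Finset.range n, x (k + 1)))
          + ∑ k ∈ Finset.range n, Real.exp (-(∑ l ∈ Finset.range k, x (l + 1))))) := by
  set e : ℕ → ℝ := fun j => Real.exp (-(∑ k ∈ Finset.range j, x (k + 1))) with he
  have hepos : ∀ j, 0 < e j := fun j => Real.exp_pos _
  have hgoal : ∀ j : ℕ, Real.exp (-(∑ k ∈ Finset.range j, x (k + 1))) = e j := fun _ => rfl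
  simp only [hgoal]
  have hden : ∀ j, j ≤ n → e n + (Finset.range n).sum e - (Finset.range j).sum e
      = e j * Tfun x n j := by
    intro j hj
    rw [exp_mul_Tfun x n j hj, Finset.sum_Ico_eq_sub _ (by omega : j ≤ n + 1),
      Finset.sum_range_succ]
    ring
  have hden0 : e n + (Finset.range n).sum e = Tfun x n 0 := by
    have h := hden 0 (by omega)
    simp only [Finset.range_zero, Finset.sum_empty, sub_zero] at h
    rw [h]
    simp [he]
  rw [hden (i + 1) (by omega), hden0]
  have hTi := Tfun_rec x hi
  have hT1 := Tfun_pos x n (i + 1)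
  have hTipos := Tfun_pos x n i
  have hT0 := Tfun_pos x n 0
  have hEx := Real.exp_pos (-(x (i + 1)))
  have hTigt : 1 < Tfun x n i := by nlinarith
  have hcomp : compF x n i 0 = 1 - 1 / Tfun x n i := compF_eq x n i
  have hcne : compF x n i 0 ≠ 0 := by
    rw [hcomp]
    have : 1 / Tfun x n i < 1 := by rw [div_lt_one hTipos]; exact hTigt
    linarith
  have herase : ∏ j ∈ (Finset.range n).erase i, compF x n j 0
      = (∏ j ∈ Finset.range n, compF x n j 0) / compF x n i 0 := by
    rw [← Finset.mul_prod_erase (Finset.range n) (fun j => compF x n j 0)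
      (Finset.mem_range.mpr hi)]
    field_simp
  have hprodall : ∏ j ∈ Finset.range n, compF x n j 0 = e n * Tfun x n n / Tfun x n 0 :=
    prod_compF x n n le_rfl
  rw [Tfun_of_le x le_rfl, mul_one] at hprodall
  rw [herase, hprodall, hcomp]
  -- e (i+1) = e i * exp (-(x (i+1)))
  have hei : e (i + 1) = e i * Real.exp (-(x (i + 1))) := by
    rw [he]
    simp only [Finset.sum_range_succ, neg_add, Real.exp_add]
  rw [hei, hTi]
  have h2 : Real.exp (-(x (i + 1))) ≠ 0 := hEx.ne'
  have h3 : Tfun x n (i + 1) ≠ 0 := hT1.ne'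
  have h5 : Tfun x n 0 ≠ 0 := hT0.ne'
  have h1 : e i ≠ 0 := (hepos i).ne'
  have h6 : (1 : ℝ) + Real.exp (-(x (i + 1))) * Tfun x n (i + 1) ≠ 0 := by positivity
  have h8 : Real.exp (-(x (i + 1))) * Tfun x n (i + 1) ≠ 0 := by positivity
  field_simp
  ring

lemma Tfun_ge_one (x : ℕ → ℝ) (n i : ℕ) : 1 ≤ Tfun x n i := by
  by_cases h : i < n
  · rw [Tfun_rec x h]
    have := Tfun_pos x n (i + 1)
    have := Real.exp_pos (-(x (i + 1)))
    nlinarith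
  · rw [Tfun_of_le x (by omega)]

lemma compF_nonneg (x : ℕ → ℝ) (n j : ℕ) : 0 ≤ compF x n j 0 := by
  rw [compF_eq]
  have h1 := Tfun_ge_one x n j
  have h0 := Tfun_pos x n j
  have : 1 / Tfun x n j ≤ 1 := by rw [div_le_one h0]; exact h1
  linarith

lemma compF_le_one (x : ℕ → ℝ) (n j : ℕ) : compF x n j 0 ≤ 1 := by
  rw [compF_eq]
  have h0 := Tfun_pos x n j
  have : 0 < 1 / Tfun x n j := by positivity
  linarith

noncomputable def gfun (n i : ℕ) : (ℕ → ℝ) → ℝ := fun y =>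
  (Real.exp (-(y i)) / (Real.exp (-(y n))
      + (∑ k ∈ Finset.range n, Real.exp (-(y k)))
      - ∑ k ∈ Finset.range (i + 1), Real.exp (-(y k)))) *
  (Real.exp (-(y n)) / (Real.exp (-(y n)) + ∑ k ∈ Finset.range n, Real.exp (-(y k))))

lemma gfun_meas (n i : ℕ) : Measurable (gfun n i) := by
  unfold gfun
  fun_prop

lemma sum_meas {Ω : Type*} [MeasurableSpace Ω] (X : ℕ → Ω → ℝ)
    (hmeas : ∀ i, Measurable (X i)) (k : ℕ) :
    Measurable (fun ω => ∑ j ∈ Finset.range k, X (j + 1) ω) :=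
  Finset.measurable_sum _ (fun j _ => hmeas _)

/-- In a BPIRE with geometric environment, the conditional probability given the
associated random walk `S` that only the `(i,n)`-clan survives at time `n`,
namely `E[(1 − F_{i,n}(0)) ∏_{k≠i} F_{k,n}(0) | S]`, equals
`(a_i/(a_n + b_n − b_{i+1})) · (a_n/(a_n + b_n))` with `a_j = e^{−S_j}`,
`b_j = ∑_{k<j} e^{−S_k}`. -/
theorem cond_prob_single_clan
    {Ω : Type*} [m0 : MeasurableSpace Ω] {μ : Measure Ω} [IsProbabilityMeasure μ]
    (X : ℕ → Ω → ℝ) (hmeas : ∀ i, Measurable (X i))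
    (S : ℕ → Ω → ℝ)
    (hS : ∀ k ω, S k ω = ∑ j ∈ Finset.range k, X (j + 1) ω)
    (b : ℕ → Ω → ℝ)
    (hb : ∀ j ω, b j ω = ∑ k ∈ Finset.range j, Real.exp (-(S k ω)))
    (mS : MeasurableSpace Ω)
    (hmS : mS = MeasurableSpace.comap (fun ω => (fun k : ℕ => S k ω))
      (MeasurableSpace.pi))
    (n i : ℕ) (hi : i < n) :
    μ[(fun ω => (1 - compF (fun k => X k ω) n i 0) *
        ∏ j ∈ (Finset.range n).erase i, compF (fun k => X k ω) n j 0) | mS]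
      =ᵐ[μ] fun ω =>
        (Real.exp (-(S i ω)) / (Real.exp (-(S n ω)) + b n ω - b (i + 1) ω)) *
        (Real.exp (-(S n ω)) / (Real.exp (-(S n ω)) + b n ω)) := by
  -- the integrand is pointwise equal to the RHS, which is a function of S
  have hfun : (fun ω => (1 - compF (fun k => X k ω) n i 0) *
        ∏ j ∈ (Finset.range n).erase i, compF (fun k => X k ω) n j 0)
      = fun ω => gfun n i (fun k => S k ω) := by
    funext ω
    rw [key_identity (fun k => X k ω) n i hi]
    simp only [gfun, hS]
  have hRHS : (fun ω =>
        (Real.exp (-(S i ω)) / (Real.exp (-(S n ω)) + b n ω - b (i + 1) ω)) *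
        (Real.exp (-(S n ω)) / (Real.exp (-(S n ω)) + b n ω)))
      = fun ω => gfun n i (fun k => S k ω) := by
    funext ω
    simp only [gfun, hb]
  have hSmeas : ∀ k, Measurable[m0] (S k) := by
    intro k
    have : S k = fun ω => ∑ j ∈ Finset.range k, X (j + 1) ω := funext (hS k)
    rw [this]
    exact @sum_meas Ω m0 X hmeas k
  have hπ : Measurable[m0] fun ω => (fun k : ℕ => S k ω) :=
    @measurable_pi_lambda Ω ℕ (fun _ => ℝ) m0 _ _ hSmeas
  have hm : mS ≤ m0 := hmS ▸ Measurable.comap_le hπ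
  have hπS : @Measurable Ω (ℕ → ℝ) mS _ (fun ω => (fun k : ℕ => S k ω)) :=
    Measurable.le (le_of_eq hmS.symm) (@measurable_iff_comap_le Ω (ℕ → ℝ)
      (MeasurableSpace.comap (fun ω => (fun k : ℕ => S k ω)) MeasurableSpace.pi)
      _ _ |>.mpr le_rfl)
  have hsm : StronglyMeasurable[mS] fun ω => gfun n i (fun k => S k ω) :=
    ((gfun_meas n i).comp hπS).stronglyMeasurable
  have hbound : ∀ ω, ‖gfun n i (fun k => S k ω)‖ ≤ 1 := by
    intro ω
    rw [← congrFun hfun ω, Real.norm_eq_abs]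
    have h0 := compF_nonneg (fun k => X k ω) n i
    have h1 := compF_le_one (fun k => X k ω) n i
    have hp0 : 0 ≤ ∏ j ∈ (Finset.range n).erase i, compF (fun k => X k ω) n j 0 :=
      Finset.prod_nonneg (fun j _ => compF_nonneg _ _ _)
    have hp1 : ∏ j ∈ (Finset.range n).erase i, compF (fun k => X k ω) n j 0 ≤ 1 :=
      Finset.prod_le_one (fun j _ => compF_nonneg _ _ _) (fun j _ => compF_le_one _ _ _)
    rw [abs_of_nonneg (mul_nonneg (by linarith) hp0)]
    nlinarith
  have hint : Integrable (fun ω => gfun n i (fun k => S k ω)) μ := by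
    refine (integrable_const (1 : ℝ)).mono' ?_ (Filter.Eventually.of_forall hbound)
    exact ((gfun_meas n i).comp hπ).aestronglyMeasurable
  rw [hfun, hRHS, condExp_of_stronglyMeasurable hm hsm hint]
end
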